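/- Let X₁,...,Xₙ be i.i.d. uniform on (0,1), c ∈ (0,1), r* = 1/max(c, 1-c), and let γₙ(r,c) be the domination number of the PICD with parameters r and c. Then as n → ∞: if r > r*, then γₙ(r,c) → 1 in probability; if 1 ≤ r < r*, then γₙ(r,c) → 2 in probability; and if r = r* with c ≠ 1/2, then γₙ(r*,c) - 1 converges in distribution to Bernoulli(r*/(r*+1)). -/

import Mathlib

open Set MeasureTheory Filter Topology

/-- The parameterized proximity region on `(0,1)`. -/
noncomputable def N01 (r c x : ℝ) : Set ℝ :=
  if x < c then Set.Ioo 0 (min 1 (r * x)) else Set.Ioo (max 0 (1 - r * (1 - x))) 1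

/-- The domination number of the digraph on vertices `X 0, …, X (n-1)` where `u` dominates
itself and every vertex lying in `N u`. -/
noncomputable def domNum (n : ℕ) (X : Fin n → ℝ) (N : ℝ → Set ℝ) : ℕ :=
  sInf {k | ∃ S : Finset (Fin n), S.card = k ∧
    ∀ j, ∃ i ∈ S, X j = X i ∨ X j ∈ N (X i)}

/-- The joint law of `n` i.i.d. uniform random variables on `(0,1)`. -/
noncomputable def unifPi (n : ℕ) : Measure (Fin n → ℝ) :=
  Measure.pi fun _ => volume.restrict (Set.Ioo (0:ℝ) 1)

/-!
The reflection `x ↦ 1 - x` preserves the uniform law and turns the PICD with parameter `c` into the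
one with parameter `1 - c`, so we may take `c ≥ 1/2`, that is `r* = 1/c`.

A point `x < c` with `r x ≥ 1` dominates all of `(0,1)`. For `r > r*` such points fill the interval
`(1/r, c)`, which the sample hits with probability tending to one.

For `r < r*`, no point dominates both a sample point in `(r c, 1)` and one in `(0, 1 - r (1 - c))`,
while the largest sample point below `c` and the smallest one above `c` always dominate the
whole sample; both intervals are hit with probability tending to one.

At `r = r*` with `c > 1/2`, outside events of exponentially small probability, a single point
dominates exactly when some sample point lies in the window `(c · max X, c)`. Splitting according
to which point is the maximum `t ≥ c`, the window is missed with probability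
`n ∫_c^1 ((1 + c) t - c)^(n-1) dt = (1 - c^(2n)) / (1 + c)`, which tends to
`1 / (1 + c) = r* / (r* + 1)`.
-/

def Dominates (N : ℝ → Set ℝ) (x y : ℝ) : Prop := y = x ∨ y ∈ N x

section DominationNumber

variable {n : ℕ} {X : Fin n → ℝ} {N : ℝ → Set ℝ}

lemma domNum_le_card (S : Finset (Fin n)) (hS : ∀ j, ∃ i ∈ S, Dominates N (X i) (X j)) :
    domNum n X N ≤ S.card :=
  Nat.sInf_le ⟨S, rfl, hS⟩

lemma exists_card_eq_domNum :
    ∃ S : Finset (Fin n), S.card = domNum n X N ∧ ∀ j, ∃ i ∈ S, Dominates N (X i) (X j) :=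
  Nat.sInf_mem (s := {k | ∃ S : Finset (Fin n), S.card = k ∧ ∀ j, ∃ i ∈ S, Dominates N (X i) (X j)})
    ⟨n, Finset.univ, Finset.card_fin n, fun j => ⟨j, Finset.mem_univ j, Or.inl rfl⟩⟩

lemma domNum_ne_zero (i : Fin n) : domNum n X N ≠ 0 := by
  intro h
  obtain ⟨S, hS, hdom⟩ := exists_card_eq_domNum (X := X) (N := N)
  obtain ⟨k, hk, -⟩ := hdom i
  simp [Finset.card_eq_zero.mp (hS.trans h)] at hk

lemma domNum_eq_one_iff : domNum n X N = 1 ↔ ∃ i, ∀ j, Dominates N (X i) (X j) := by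
  constructor
  · intro h
    obtain ⟨S, hS, hdom⟩ := exists_card_eq_domNum (X := X) (N := N)
    obtain ⟨i, rfl⟩ := Finset.card_eq_one.mp (hS.trans h)
    exact ⟨i, fun j => by simpa using hdom j⟩
  · rintro ⟨i, hi⟩
    have hle := (domNum_le_card {i} fun j => ⟨i, Finset.mem_singleton_self i, hi j⟩).trans_eq
      (Finset.card_singleton i)
    have hne := domNum_ne_zero (X := X) (N := N) i
    omega

lemma domNum_eq_two_iff : domNum n X N = 2 ↔ (¬ ∃ i, ∀ j, Dominates N (X i) (X j)) ∧
    ∃ i₁ i₂, ∀ j, Dominates N (X i₁) (X j) ∨ Dominates N (X i₂) (X j) := by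
  rw [← domNum_eq_one_iff]
  constructor
  · intro h
    obtain ⟨S, hS, hdom⟩ := exists_card_eq_domNum (X := X) (N := N)
    obtain ⟨i₁, i₂, -, rfl⟩ := Finset.card_eq_two.mp (hS.trans h)
    refine ⟨by omega, i₁, i₂, fun j => ?_⟩
    simpa using hdom j
  · rintro ⟨h1, i₁, i₂, hi⟩
    have hle := (domNum_le_card {i₁, i₂} fun j => (hi j).elim
      (fun h => ⟨i₁, by simp, h⟩) (fun h => ⟨i₂, by simp, h⟩)).trans Finset.card_le_two
    have hne := domNum_ne_zero (X := X) (N := N) i₁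
    omega

lemma domNum_congr {Y : Fin n → ℝ} {N' : ℝ → Set ℝ}
    (h : ∀ i j, Dominates N (X i) (X j) ↔ Dominates N' (Y i) (Y j)) :
    domNum n X N = domNum n Y N' := by
  simp only [Dominates] at h
  simp only [domNum, h]

end DominationNumber

section Geometry

variable {r c x y : ℝ}

lemma mem_N01_of_lt (hx : x < c) : y ∈ N01 r c x ↔ 0 < y ∧ y < 1 ∧ y < r * x := by
  simp [N01, hx]

lemma mem_N01_of_le (hx : c ≤ x) : y ∈ N01 r c x ↔ 0 < y ∧ y < 1 ∧ 1 - r * (1 - x) < y := by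
  simp only [N01, if_neg (not_lt.mpr hx), mem_Ioo, max_lt_iff]
  tauto

lemma mem_N01_iff_oneSub_mem (hx : x ≠ c) : y ∈ N01 r c x ↔ 1 - y ∈ N01 r (1 - c) (1 - x) := by
  rcases hx.lt_or_gt with hx | hx
  · rw [mem_N01_of_lt hx, mem_N01_of_le (by linarith)]
    constructor <;> rintro ⟨h1, h2, h3⟩ <;> refine ⟨?_, ?_, ?_⟩ <;> linarith
  · rw [mem_N01_of_le hx.le, mem_N01_of_lt (by linarith)]
    constructor <;> rintro ⟨h1, h2, h3⟩ <;> refine ⟨?_, ?_, ?_⟩ <;> linarith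

lemma dominates_N01_iff_oneSub (hx : x ≠ c) :
    Dominates (N01 r c) x y ↔ Dominates (N01 r (1 - c)) (1 - x) (1 - y) := by
  rw [Dominates, Dominates, mem_N01_iff_oneSub_mem hx, sub_right_inj]

lemma dominates_N01_of_lt_of_one_le_mul (hx : x < c) (hrx : 1 ≤ r * x) (hy : y ∈ Ioo 0 1) :
    Dominates (N01 r c) x y :=
  Or.inr ((mem_N01_of_lt hx).mpr ⟨hy.1, hy.2, by linarith [hy.2]⟩)

lemma dominates_N01_of_le_of_lt (hr : 1 ≤ r) (hx : x < c) (hy : y ∈ Ioo 0 1) (hyx : y ≤ x) :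
    Dominates (N01 r c) x y := by
  rcases hyx.eq_or_lt with h | h
  · exact Or.inl h
  · exact Or.inr ((mem_N01_of_lt hx).mpr ⟨hy.1, hy.2, by nlinarith [hy.1]⟩)

lemma dominates_N01_of_le_of_le (hr : 1 ≤ r) (hx : c ≤ x) (hy : y ∈ Ioo 0 1) (hxy : x ≤ y) :
    Dominates (N01 r c) x y := by
  rcases hxy.eq_or_lt with h | h
  · exact Or.inl h.symm
  · exact Or.inr ((mem_N01_of_le hx).mpr ⟨hy.1, hy.2, by nlinarith [hy.2]⟩)

lemma lt_of_dominates_N01 (hr : 1 ≤ r) (hc : c ≤ 1) (hD : Dominates (N01 r c) x y)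
    (hy : y < 1 - r * (1 - c)) : x < c := by
  by_contra! hx
  rcases hD with h | h
  · nlinarith
  · nlinarith [((mem_N01_of_le hx).mp h).2.2]

lemma le_of_dominates_N01 (hr : 1 ≤ r) (hc : 0 ≤ c) (hD : Dominates (N01 r c) x y)
    (hy : r * c < y) : c ≤ x := by
  by_contra! hx
  rcases hD with h | h
  · nlinarith
  · nlinarith [((mem_N01_of_lt hx).mp h).2.2]

lemma dominates_N01_of_mul_lt (hrc : r * c = 1) (hx : x < c) (hy : y ∈ Ioo 0 1)
    (hyx : c * y < x) : Dominates (N01 r c) x y := by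
  refine Or.inr ((mem_N01_of_lt hx).mpr ⟨hy.1, hy.2, ?_⟩)
  have hc : 0 < c := by nlinarith [hy.2]
  have hr : 0 < r := by nlinarith
  calc y = r * c * y := by rw [hrc, one_mul]
    _ < r * x := by rw [mul_assoc]; exact mul_lt_mul_of_pos_left hyx hr

lemma mul_lt_of_dominates_N01 (hrc : r * c = 1) (hc : c < 1) (hx0 : 0 < x) (hx : x < c)
    (hD : Dominates (N01 r c) x y) : c * y < x := by
  rcases hD with rfl | h
  · nlinarith
  · have := ((mem_N01_of_lt hx).mp h).2.2
    calc c * y < c * (r * x) := mul_lt_mul_of_pos_left this (hx0.trans hx)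
      _ = x := by rw [← mul_assoc, mul_comm c r, hrc, one_mul]

end Geometry

section ProductMeasure

variable {α ι : Type*} [MeasurableSpace α] [Fintype ι] {ν : Measure α}

lemma ae_pi_forall_mem [SigmaFinite ν] {s : Set α} (hs : ∀ᵐ x ∂ν, x ∈ s) :
    ∀ᵐ X ∂Measure.pi (fun _ : ι => ν), ∀ i, X i ∈ s :=
  ae_all_iff.mpr fun _ => Measure.tendsto_eval_ae_ae.eventually hs

lemma pi_forall_mem [SigmaFinite ν] (s : Set α) :
    Measure.pi (fun _ : ι => ν) {X | ∀ i, X i ∈ s} = ν s ^ Fintype.card ι := by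
  rw [show {X : ι → α | ∀ i, X i ∈ s} = Set.pi univ fun _ => s by ext; simp, Measure.pi_pi,
    Finset.prod_const, Finset.card_univ]

lemma pi_coord_mem_and_forall_ne_mem [SigmaFinite ν] {n : ℕ} (k : Fin (n + 1)) {S : Set α}
    (hS : MeasurableSet S) {A : α → Set α} (hA : MeasurableSet {p : α × α | p.2 ∈ A p.1}) :
    Measure.pi (fun _ => ν) {X | X k ∈ S ∧ ∀ j ≠ k, X j ∈ A (X k)} = ∫⁻ t in S, ν (A t) ^ n ∂ν := by
  set T : Set (α × (Fin n → α)) := Prod.fst ⁻¹' S ∩ ⋂ j, {p | p.2 j ∈ A p.1}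
  have hT : MeasurableSet T := by
    refine (measurable_fst hS).inter (MeasurableSet.iInter fun j => ?_)
    exact hA.preimage (measurable_fst.prodMk ((measurable_pi_apply j).comp measurable_snd))
  have hpre : {X : Fin (n + 1) → α | X k ∈ S ∧ ∀ j ≠ k, X j ∈ A (X k)} =
      MeasurableEquiv.piFinSuccAbove (fun _ => α) k ⁻¹' T := by
    ext X
    simp only [T, mem_ofPred_eq, mem_preimage, mem_inter_iff, mem_iInter,
      MeasurableEquiv.piFinSuccAbove_apply]
    refine and_congr_right fun _ => ⟨fun h j => h _ (Fin.succAbove_ne k j), fun h j hj => ?_⟩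
    obtain ⟨z, rfl⟩ := Fin.exists_succAbove_eq hj
    exact h z
  have hslice (t : α) : Measure.pi (fun _ : Fin n => ν) (Prod.mk t ⁻¹' T) =
      S.indicator (fun t => ν (A t) ^ n) t := by
    by_cases ht : t ∈ S
    · rw [indicator_of_mem ht, show Prod.mk t ⁻¹' T = Set.pi univ fun _ => A t by ext; simp [T, ht],
        Measure.pi_pi, Finset.prod_const, Finset.card_univ, Fintype.card_fin]
    · rw [indicator_of_notMem ht, show Prod.mk t ⁻¹' T = ∅ by ext; simp [T, ht], measure_empty]
  rw [hpre, ((measurePreserving_piFinSuccAbove (fun _ => ν) k).measure_preimage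
    hT.nullMeasurableSet), Measure.prod_apply hT, lintegral_congr hslice, lintegral_indicator hS]

end ProductMeasure

def AsymptoticallyAlmostSurely {Ω : ℕ → Type*} [∀ n, MeasurableSpace (Ω n)]
    (μ : ∀ n, Measure (Ω n)) (F : ∀ n, Set (Ω n)) : Prop :=
  Tendsto (fun n => μ n (F n)ᶜ) atTop (𝓝 0)

namespace AsymptoticallyAlmostSurely

variable {Ω : ℕ → Type*} [∀ n, MeasurableSpace (Ω n)] {μ : ∀ n, Measure (Ω n)}
  {F F' A B : ∀ n, Set (Ω n)}

lemma of_ae (h : ∀ n, ∀ᵐ ω ∂μ n, ω ∈ F n) : AsymptoticallyAlmostSurely μ F := by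
  have h0 : ∀ n, μ n (F n)ᶜ = 0 := fun n => ae_iff.mp (h n)
  simp only [AsymptoticallyAlmostSurely, h0, tendsto_const_nhds]

lemma inter (h : AsymptoticallyAlmostSurely μ F) (h' : AsymptoticallyAlmostSurely μ F') :
    AsymptoticallyAlmostSurely μ fun n => F n ∩ F' n := by
  refine tendsto_of_tendsto_of_tendsto_of_le_of_le tendsto_const_nhds (by simpa using h.add h')
    (fun _ => zero_le) fun n => ?_
  simpa only [compl_inter] using measure_union_le _ _

lemma tendsto_measureReal_congr [∀ n, IsFiniteMeasure (μ n)] (hF : AsymptoticallyAlmostSurely μ F)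
    (hAB : ∀ n, ∀ ω ∈ F n, ω ∈ A n ↔ ω ∈ B n) {p : ℝ}
    (hB : Tendsto (fun n => (μ n).real (B n)) atTop (𝓝 p)) :
    Tendsto (fun n => (μ n).real (A n)) atTop (𝓝 p) := by
  have hF' : Tendsto (fun n => (μ n).real (F n)ᶜ) atTop (𝓝 0) :=
    (ENNReal.tendsto_toReal ENNReal.zero_ne_top).comp hF
  have le_add {A B : ∀ n, Set (Ω n)} (h : ∀ n, ∀ ω ∈ F n, ω ∈ A n → ω ∈ B n) (n : ℕ) :
      (μ n).real (A n) ≤ (μ n).real (B n) + (μ n).real (F n)ᶜ := by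
    refine (measureReal_mono fun ω hω => ?_).trans (measureReal_union_le _ _)
    by_cases hωF : ω ∈ F n
    · exact Or.inl (h n ω hωF hω)
    · exact Or.inr hωF
  refine tendsto_of_tendsto_of_tendsto_of_le_of_le (by simpa using hB.sub hF')
    (by simpa using hB.add hF') (fun n => ?_) (le_add fun n ω hω => (hAB n ω hω).mp)
  linarith [le_add (fun n ω hω => (hAB n ω hω).mpr) n]

lemma tendsto_measureReal_one [∀ n, IsProbabilityMeasure (μ n)]
    (hF : AsymptoticallyAlmostSurely μ F) (hA : ∀ n, F n ⊆ A n) :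
    Tendsto (fun n => (μ n).real (A n)) atTop (𝓝 1) :=
  hF.tendsto_measureReal_congr (B := fun _ => univ) (fun n ω hω => iff_of_true (hA n hω) trivial)
    (by simp)

end AsymptoticallyAlmostSurely

lemma asymptoticallyAlmostSurely_exists_mem {α : Type*} [MeasurableSpace α] {ν : Measure α}
    [IsProbabilityMeasure ν] {s : Set α} (hs : MeasurableSet s) (hνs : ν s ≠ 0) :
    AsymptoticallyAlmostSurely (fun n => Measure.pi fun _ : Fin n => ν)
      fun n => {X : Fin n → α | ∃ i, X i ∈ s} := by
  have hcompl : ∀ n : ℕ, {X : Fin n → α | ∃ i, X i ∈ s}ᶜ = {X | ∀ i, X i ∈ sᶜ} := by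
    intro n; ext; simp
  simp only [AsymptoticallyAlmostSurely, hcompl, pi_forall_mem, Fintype.card_fin]
  refine ENNReal.tendsto_pow_atTop_nhds_zero_of_lt_one ?_
  rw [prob_compl_eq_one_sub hs]
  exact ENNReal.sub_lt_self ENNReal.one_ne_top one_ne_zero hνs

section Uniform

instance : IsProbabilityMeasure (volume.restrict (Ioo (0:ℝ) 1)) :=
  ⟨by simp⟩

instance (n : ℕ) : IsProbabilityMeasure (unifPi n) := by
  unfold unifPi
  infer_instance

lemma ae_unifPi_mem_Ioo (n : ℕ) : ∀ᵐ X ∂unifPi n, ∀ i, X i ∈ Ioo 0 1 :=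
  ae_pi_forall_mem (ae_restrict_mem measurableSet_Ioo)

lemma ae_unifPi_ne (n : ℕ) (c : ℝ) : ∀ᵐ X ∂unifPi n, ∀ i, X i ≠ c :=
  ae_pi_forall_mem (Measure.ae_ne _ c)

lemma asymptoticallyAlmostSurely_exists_mem_Ioo {a b : ℝ} (ha : 0 ≤ a) (hab : a < b)
    (hb : b ≤ 1) :
    AsymptoticallyAlmostSurely unifPi fun n => {X : Fin n → ℝ | ∃ i, X i ∈ Ioo a b} := by
  refine asymptoticallyAlmostSurely_exists_mem measurableSet_Ioo ?_
  rw [Measure.restrict_apply measurableSet_Ioo, inter_eq_left.mpr (Ioo_subset_Ioo ha hb),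
    Real.volume_Ioo]
  simpa using hab

lemma measurePreserving_oneSub_unifPi (n : ℕ) :
    MeasurePreserving (MeasurableEquiv.piCongrRight fun _ : Fin n => MeasurableEquiv.subLeft (1:ℝ))
      (unifPi n) (unifPi n) := by
  have h := (Measure.measurePreserving_sub_left volume (1:ℝ)).restrict_preimage
    (measurableSet_Ioo (a := (0:ℝ)) (b := 1))
  have hpre : (fun t : ℝ => 1 - t) ⁻¹' Ioo 0 1 = Ioo 0 1 := by
    ext t
    simp only [mem_preimage, mem_Ioo]
    constructor <;> rintro ⟨h₁, h₂⟩ <;> constructor <;> linarith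
  rw [hpre] at h
  exact measurePreserving_pi (fun _ : Fin n => volume.restrict (Ioo (0:ℝ) 1)) _ fun _ => h

lemma domNum_N01_oneSub {n : ℕ} {X : Fin n → ℝ} {r c : ℝ} (hX : ∀ i, X i ≠ c) :
    domNum n (fun i => 1 - X i) (N01 r (1 - c)) = domNum n X (N01 r c) :=
  domNum_congr fun i _ => (dominates_N01_iff_oneSub (hX i)).symm

lemma unifPi_domNum_N01_oneSub (n k : ℕ) (r c : ℝ) :
    unifPi n {X | domNum n X (N01 r (1 - c)) = k} = unifPi n {X | domNum n X (N01 r c) = k} := by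
  rw [← (measurePreserving_oneSub_unifPi n).measure_preimage_equiv]
  refine measure_congr (eventuallyEq_set.mpr ?_)
  filter_upwards [ae_unifPi_ne n c] with X hX
  exact Eq.congr_left (domNum_N01_oneSub hX)

end Uniform

section CriticalWindow

def HitsCriticalWindow (c : ℝ) {n : ℕ} (X : Fin n → ℝ) : Prop :=
  ∃ i, X i < c ∧ ∀ j, c * X j < X i

variable {c : ℝ}

lemma measurableSet_hitsCriticalWindow (n : ℕ) (c : ℝ) :
    MeasurableSet {X : Fin n → ℝ | HitsCriticalWindow c X} := by
  simp only [HitsCriticalWindow, ofPred_exists, ofPred_and, ofPred_forall]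
  measurability

lemma volume_restrict_window_slice (hc0 : 0 < c) {t : ℝ} (ht : t ∈ Ico c 1) {T : Set ℝ}
    (hTl : Ico c t ⊆ T) (hTu : T ⊆ Icc c t) :
    volume.restrict (Ioo 0 1) (Ioc 0 (c * t) ∪ T) = ENNReal.ofReal ((1 + c) * t - c) := by
  have hct : c * t < c := by nlinarith [ht.2]
  have hT : volume T = ENNReal.ofReal (t - c) :=
    le_antisymm ((measure_mono hTu).trans_eq Real.volume_Icc)
      (Real.volume_Ico.symm.trans_le (measure_mono hTl))
  have hsub : Ioc 0 (c * t) ∪ T ⊆ Ioo 0 1 := union_subset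
    (fun x hx => ⟨hx.1, by linarith [hx.2, ht.1, ht.2]⟩)
    (fun x hx => ⟨by linarith [(hTu hx).1], by linarith [(hTu hx).2, ht.2]⟩)
  have hdisj : Disjoint (Ioc 0 (c * t)) T :=
    disjoint_left.mpr fun x hx hxT => by linarith [hx.2, (hTu hxT).1]
  rw [Measure.restrict_apply' measurableSet_Ioo, inter_eq_left.mpr hsub,
    measure_union' hdisj measurableSet_Ioc, Real.volume_Ioc, hT,
    ← ENNReal.ofReal_add (by nlinarith [ht.1]) (by linarith [ht.1])]
  ring_nf

lemma setLIntegral_window_pow (hc0 : 0 < c) (hc1 : c < 1) (n : ℕ) :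
    ∫⁻ t in Ico c 1, ENNReal.ofReal ((1 + c) * t - c) ^ n ∂volume.restrict (Ioo 0 1) =
      ENNReal.ofReal ((1 - c ^ (2 * (n + 1))) / ((n + 1) * (1 + c))) := by
  have hIco : Ico c 1 ∩ Ioo 0 1 = Ico c 1 :=
    inter_eq_left.mpr fun t ht => ⟨hc0.trans_le ht.1, ht.2⟩
  have hnonneg : ∀ t ∈ Ico c 1, 0 ≤ (1 + c) * t - c := fun t ht => by nlinarith [ht.1]
  rw [Measure.restrict_restrict measurableSet_Ico, hIco,
    setLIntegral_congr_fun measurableSet_Ico fun t ht => (ENNReal.ofReal_pow (hnonneg t ht) n).symm,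
    ← ofReal_integral_eq_lintegral_ofReal]
  · congr 1
    rw [integral_Ico_eq_integral_Ioo, ← integral_Ioc_eq_integral_Ioo,
      ← intervalIntegral.integral_of_le hc1.le,
      intervalIntegral.integral_comp_mul_sub (fun x => x ^ n) (by positivity), integral_pow]
    rw [smul_eq_mul, show (1 + c) * 1 - c = 1 by ring, show (1 + c) * c - c = c ^ 2 by ring,
      one_pow, ← pow_mul, inv_mul_eq_div, div_div]
  · exact (Continuous.integrableOn_Icc (by fun_prop)).mono_set Ico_subset_Icc_self
  · exact (ae_restrict_iff' measurableSet_Ico).mpr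
      (ae_of_all _ fun t ht => pow_nonneg (hnonneg t ht) n)

-- `T (X k)` is `Ico c (X k)` or `Icc c (X k)`: whether the other points may tie with `X k`.
def windowGapAt (c : ℝ) (T : ℝ → Set ℝ) {n : ℕ} (k : Fin n) : Set (Fin n → ℝ) :=
  {X | X k ∈ Ico c 1 ∧ ∀ j ≠ k, X j ∈ Ioc 0 (c * X k) ∪ T (X k)}

lemma measurableSet_windowGapAt {T : ℝ → Set ℝ}
    (hTm : MeasurableSet {p : ℝ × ℝ | p.2 ∈ Ioc 0 (c * p.1) ∪ T p.1}) {n : ℕ} (k : Fin n) :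
    MeasurableSet (windowGapAt c T k) := by
  have hW : windowGapAt c T k = (fun X => X k) ⁻¹' Ico c 1 ∩
      ⋂ j, ⋂ (_ : j ≠ k),
        (fun X => (X k, X j)) ⁻¹' {p : ℝ × ℝ | p.2 ∈ Ioc 0 (c * p.1) ∪ T p.1} := by
    ext X
    simp [windowGapAt]
  rw [hW]
  exact (measurableSet_Ico.preimage (measurable_pi_apply k)).inter
    (MeasurableSet.iInter fun j => MeasurableSet.iInter fun _ => hTm.preimage (by fun_prop))

lemma unifPi_windowGapAt (hc0 : 0 < c) (hc1 : c < 1) {T : ℝ → Set ℝ}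
    (hT : ∀ t, Ico c t ⊆ T t ∧ T t ⊆ Icc c t)
    (hTm : MeasurableSet {p : ℝ × ℝ | p.2 ∈ Ioc 0 (c * p.1) ∪ T p.1}) {n : ℕ} (k : Fin (n + 1)) :
    unifPi (n + 1) (windowGapAt c T k) =
      ENNReal.ofReal ((1 - c ^ (2 * (n + 1))) / ((n + 1) * (1 + c))) := by
  rw [unifPi, ← setLIntegral_window_pow hc0 hc1]
  refine (pi_coord_mem_and_forall_ne_mem (A := fun t => Ioc 0 (c * t) ∪ T t) k
    measurableSet_Ico hTm).trans ?_
  exact setLIntegral_congr_fun measurableSet_Ico fun t ht => by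
    rw [volume_restrict_window_slice hc0 ht (hT t).1 (hT t).2]

lemma sum_unifPi_windowGapAt (hc0 : 0 < c) (hc1 : c < 1) {T : ℝ → Set ℝ}
    (hT : ∀ t, Ico c t ⊆ T t ∧ T t ⊆ Icc c t)
    (hTm : MeasurableSet {p : ℝ × ℝ | p.2 ∈ Ioc 0 (c * p.1) ∪ T p.1}) (n : ℕ) :
    ∑ k : Fin (n + 1), unifPi (n + 1) (windowGapAt c T k) =
      ENNReal.ofReal ((1 - c ^ (2 * (n + 1))) / (1 + c)) := by
  simp only [unifPi_windowGapAt hc0 hc1 hT hTm, Finset.sum_const, Finset.card_univ,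
    Fintype.card_fin, nsmul_eq_mul]
  rw [← ENNReal.ofReal_natCast, ← ENNReal.ofReal_mul (by positivity)]
  congr 1
  push_cast
  field_simp

lemma pairwise_disjoint_windowGapAt_Ico (hc0 : 0 < c) (n : ℕ) :
    Pairwise (Function.onFun Disjoint fun k : Fin n => windowGapAt c (Ico c) k) := by
  intro k l hkl
  refine disjoint_left.mpr fun X ⟨hk, hXk⟩ ⟨hl, hXl⟩ => ?_
  have hck : c * X k < c := by nlinarith [hk.1, hk.2]
  have hcl : c * X l < c := by nlinarith [hl.1, hl.2]
  rcases hXk l (Ne.symm hkl) with h | h <;> rcases hXl k hkl with h' | h'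
  all_goals linarith [h.1, h.2, h'.1, h'.2, hk.1, hl.1]

lemma not_hitsCriticalWindow_of_mem_windowGapAt {n : ℕ} {X : Fin n → ℝ} {T : ℝ → Set ℝ}
    {k : Fin n} (hT : ∀ t, T t ⊆ Ici c) (hX : X ∈ windowGapAt c T k) :
    ¬ HitsCriticalWindow c X := by
  rintro ⟨i, hic, hi⟩
  have hik : i ≠ k := by rintro rfl; linarith [hX.1.1]
  rcases hX.2 i hik with h | h
  · linarith [h.2, hi k]
  · linarith [mem_Ici.mp (hT _ h)]

lemma exists_mem_windowGapAt_Icc_of_not_hitsCriticalWindow {n : ℕ} {X : Fin (n + 1) → ℝ}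
    (hc1 : c < 1) (hX : ∀ j, X j ∈ Ioo 0 1) (hE : ¬ HitsCriticalWindow c X) :
    ∃ k, X ∈ windowGapAt c (Icc c) k := by
  obtain ⟨k, -, hmax⟩ := Finset.exists_max_image Finset.univ X Finset.univ_nonempty
  have hmax' : ∀ j, X j ≤ X k := fun j => hmax j (Finset.mem_univ j)
  have hkc : c ≤ X k := by
    by_contra! hkc
    exact hE ⟨k, hkc, fun j => by nlinarith [hmax' j, (hX j).1, (hX k).1]⟩
  refine ⟨k, ⟨hkc, (hX k).2⟩, fun j _ => ?_⟩
  by_cases hjc : X j < c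
  · refine Or.inl ⟨(hX j).1, ?_⟩
    by_contra! hj
    exact hE ⟨j, hjc, fun j' => by nlinarith [hmax' j', (hX j).1]⟩
  · exact Or.inr ⟨not_lt.mp hjc, hmax' j⟩

lemma unifPi_not_hitsCriticalWindow (hc0 : 0 < c) (hc1 : c < 1) (n : ℕ) :
    unifPi (n + 1) {X | ¬ HitsCriticalWindow c X} =
      ENNReal.ofReal ((1 - c ^ (2 * (n + 1))) / (1 + c)) := by
  have hmIco : MeasurableSet {p : ℝ × ℝ | p.2 ∈ Ioc 0 (c * p.1) ∪ Ico c p.1} := by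
    simp only [mem_union, mem_Ioc, mem_Ico, ofPred_or, ofPred_and]
    measurability
  have hmIcc : MeasurableSet {p : ℝ × ℝ | p.2 ∈ Ioc 0 (c * p.1) ∪ Icc c p.1} := by
    simp only [mem_union, mem_Ioc, mem_Icc, ofPred_or, ofPred_and]
    measurability
  refine le_antisymm ?_ ?_
  · calc unifPi (n + 1) {X | ¬ HitsCriticalWindow c X}
        ≤ unifPi (n + 1) (⋃ k, windowGapAt c (Icc c) k) := by
          refine measure_mono_ae ?_
          filter_upwards [ae_unifPi_mem_Ioo (n + 1)] with X hX hE
          exact mem_iUnion.mpr (exists_mem_windowGapAt_Icc_of_not_hitsCriticalWindow hc1 hX hE)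
      _ ≤ ∑ k, unifPi (n + 1) (windowGapAt c (Icc c) k) := measure_iUnion_fintype_le _ _
      _ = _ := sum_unifPi_windowGapAt hc0 hc1
          (fun _ => ⟨Ico_subset_Icc_self, subset_rfl⟩) hmIcc n
  · calc ENNReal.ofReal ((1 - c ^ (2 * (n + 1))) / (1 + c))
        = unifPi (n + 1) (⋃ k, windowGapAt c (Ico c) k) := by
          rw [measure_iUnion (pairwise_disjoint_windowGapAt_Ico hc0 _)
            (measurableSet_windowGapAt hmIco), tsum_fintype,
            sum_unifPi_windowGapAt hc0 hc1 (fun _ => ⟨subset_rfl, Ico_subset_Icc_self⟩) hmIco]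
      _ ≤ unifPi (n + 1) {X | ¬ HitsCriticalWindow c X} :=
          measure_mono (iUnion_subset fun _ _ hX =>
            not_hitsCriticalWindow_of_mem_windowGapAt (fun _ _ h => h.1) hX)

end CriticalWindow

section Regimes

variable {r c : ℝ}

lemma exists_two_dominators_N01 {n : ℕ} {X : Fin n → ℝ} (hr : 1 ≤ r) (hX : ∀ j, X j ∈ Ioo 0 1)
    (h₁ : ∃ i, X i < c) (h₂ : ∃ i, c ≤ X i) :
    ∃ i₁ i₂, ∀ j, Dominates (N01 r c) (X i₁) (X j) ∨ Dominates (N01 r c) (X i₂) (X j) := by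
  classical
  obtain ⟨i₁, hi₁, hmax⟩ := Finset.exists_max_image (Finset.univ.filter fun i => X i < c) X
    (by simpa [Finset.filter_nonempty_iff] using h₁)
  obtain ⟨i₂, hi₂, hmin⟩ := Finset.exists_min_image (Finset.univ.filter fun i => c ≤ X i) X
    (by simpa [Finset.filter_nonempty_iff] using h₂)
  simp only [Finset.mem_filter, Finset.mem_univ, true_and] at hi₁ hi₂ hmax hmin
  refine ⟨i₁, i₂, fun j => ?_⟩
  rcases lt_or_ge (X j) c with hj | hj
  · exact Or.inl (dominates_N01_of_le_of_lt hr hi₁ (hX j) (hmax j hj))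
  · exact Or.inr (dominates_N01_of_le_of_le hr hi₂ (hX j) (hmin j hj))

lemma tendsto_unifPi_domNum_eq_one (hc0 : 0 < c) (hc1 : c < 1) (hrc : 1 < r * c) :
    Tendsto (fun n => (unifPi n {X | domNum n X (N01 r c) = 1}).toReal) atTop (𝓝 1) := by
  have hr : 0 < r := by nlinarith
  have hrc' : 1 / r < c := by rwa [div_lt_iff₀ hr, mul_comm]
  refine ((AsymptoticallyAlmostSurely.of_ae ae_unifPi_mem_Ioo).inter
    (asymptoticallyAlmostSurely_exists_mem_Ioo (by positivity) hrc' hc1.le)).tendsto_measureReal_one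
    fun n X ⟨hX, i, hi⟩ => domNum_eq_one_iff.mpr ⟨i, fun j => ?_⟩
  refine dominates_N01_of_lt_of_one_le_mul hi.2 ?_ (hX j)
  have hri := (div_lt_iff₀ hr).mp hi.1
  linarith

lemma tendsto_unifPi_domNum_eq_two (hc0 : 0 ≤ c) (hc1 : c ≤ 1) (hr : 1 ≤ r) (hrc : r * c < 1)
    (hrc' : r * (1 - c) < 1) :
    Tendsto (fun n => (unifPi n {X | domNum n X (N01 r c) = 2}).toReal) atTop (𝓝 1) := by
  refine (((AsymptoticallyAlmostSurely.of_ae ae_unifPi_mem_Ioo).inter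
    (asymptoticallyAlmostSurely_exists_mem_Ioo (by positivity) hrc le_rfl)).inter
    (asymptoticallyAlmostSurely_exists_mem_Ioo (a := 0) (b := 1 - r * (1 - c)) le_rfl
      (by linarith) (by nlinarith))).tendsto_measureReal_one
    fun n X ⟨⟨hX, j₁, hj₁⟩, j₂, hj₂⟩ => domNum_eq_two_iff.mpr ⟨?_, ?_⟩
  · rintro ⟨i, hi⟩
    exact (le_of_dominates_N01 hr hc0 (hi j₁) hj₁.1).not_gt
      (lt_of_dominates_N01 hr hc1 (hi j₂) hj₂.2)
  · exact exists_two_dominators_N01 hr hX ⟨j₂, by nlinarith [hj₂.2]⟩ ⟨j₁, by nlinarith [hj₁.1]⟩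

lemma exists_dominator_N01_iff_hitsCriticalWindow {n : ℕ} {X : Fin n → ℝ} (hc0 : 0 < c)
    (hc1 : c < 1) (hrc : r * c = 1) (hX : ∀ j, X j ∈ Ioo 0 1) {j₀ : Fin n}
    (hj₀ : X j₀ < 1 - r * (1 - c)) :
    (∃ i, ∀ j, Dominates (N01 r c) (X i) (X j)) ↔ HitsCriticalWindow c X := by
  have hr : 1 ≤ r := by nlinarith
  constructor
  · rintro ⟨i, hi⟩
    have hic := lt_of_dominates_N01 hr hc1.le (hi j₀) hj₀
    exact ⟨i, hic, fun j => mul_lt_of_dominates_N01 hrc hc1 (hX i).1 hic (hi j)⟩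
  · rintro ⟨i, hic, hi⟩
    exact ⟨i, fun j => dominates_N01_of_mul_lt hrc hic (hX j) (hi j)⟩

lemma tendsto_unifPi_not_hitsCriticalWindow (hc0 : 0 < c) (hc1 : c < 1) :
    Tendsto (fun n => (unifPi n).real {X | ¬ HitsCriticalWindow c X}) atTop (𝓝 (1 / (1 + c))) := by
  rw [← tendsto_add_atTop_iff_nat 1]
  have hpow : Tendsto (fun n : ℕ => (c ^ 2) ^ (n + 1)) atTop (𝓝 0) :=
    (tendsto_pow_atTop_nhds_zero_of_lt_one (by positivity) (by nlinarith)).comp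
      (tendsto_add_atTop_nat 1)
  have hval : ∀ n : ℕ, (unifPi (n + 1)).real {X | ¬ HitsCriticalWindow c X} =
      (1 - (c ^ 2) ^ (n + 1)) / (1 + c) := fun n => by
    have hle : (c ^ 2) ^ (n + 1) ≤ 1 := pow_le_one₀ (sq_nonneg c) (by nlinarith)
    rw [measureReal_def, unifPi_not_hitsCriticalWindow hc0 hc1, pow_mul,
      ENNReal.toReal_ofReal (div_nonneg (by linarith) (by linarith))]
  simpa [hval] using (hpow.const_sub 1).div_const (1 + c)

lemma tendsto_unifPi_domNum_critical (hc : 1 / 2 < c) (hc1 : c < 1) (hrc : r * c = 1) :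
    Tendsto (fun n => (unifPi n {X | domNum n X (N01 r c) = 2}).toReal) atTop
        (𝓝 (1 / (1 + c))) ∧
      Tendsto (fun n => (unifPi n {X | domNum n X (N01 r c) = 1}).toReal) atTop
        (𝓝 (1 - 1 / (1 + c))) := by
  have hc0 : 0 < c := by linarith
  have hr : 0 < r := by nlinarith
  have hF := ((AsymptoticallyAlmostSurely.of_ae ae_unifPi_mem_Ioo).inter
    (asymptoticallyAlmostSurely_exists_mem_Ioo le_rfl (a := 0) (b := 1 - r * (1 - c))
      (by nlinarith) (by nlinarith))).inter
    (asymptoticallyAlmostSurely_exists_mem_Ioo hc0.le hc1 le_rfl)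
  have hlim := tendsto_unifPi_not_hitsCriticalWindow hc0 hc1
  constructor
  · refine hF.tendsto_measureReal_congr (fun n X ⟨⟨hX, j₀, hj₀⟩, j₁, hj₁⟩ => ?_) hlim
    rw [mem_ofPred_eq, mem_ofPred_eq, domNum_eq_two_iff,
      exists_dominator_N01_iff_hitsCriticalWindow hc0 hc1 hrc hX hj₀.2]
    exact and_iff_left (exists_two_dominators_N01 (by nlinarith) hX ⟨j₀, by nlinarith [hj₀.2]⟩
      ⟨j₁, hj₁.1.le⟩)
  · refine hF.tendsto_measureReal_congr (B := fun n => {X : Fin n → ℝ | HitsCriticalWindow c X})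
      (fun n X ⟨⟨hX, j₀, hj₀⟩, _⟩ => ?_) ?_
    · exact domNum_eq_one_iff.trans
        (exists_dominator_N01_iff_hitsCriticalWindow hc0 hc1 hrc hX hj₀.2)
    · have hcompl : ∀ n, (unifPi n).real {X | HitsCriticalWindow c X} =
          1 - (unifPi n).real {X | ¬ HitsCriticalWindow c X} := fun n =>
        eq_sub_of_add_eq (probReal_add_probReal_compl (measurableSet_hitsCriticalWindow n c))
      simpa [hcompl] using hlim.const_sub 1

end Regimes

/-- Asymptotics of the domination number for uniform data: with
`r* = 1/max(c,1-c)`, as `n → ∞`, `γₙ(r,c) → 1` in probability if `r > r*`,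
`γₙ(r,c) → 2` in probability if `1 ≤ r < r*`, and for `r = r*` with `c ≠ 1/2`,
`γₙ(r*,c) - 1` converges in distribution to `Bernoulli(r*/(r*+1))`. -/
theorem picd_domNum_asymptotics (c r : ℝ) (hc : c ∈ Set.Ioo (0:ℝ) 1) (hr : 1 ≤ r) :
    (1 / max c (1 - c) < r →
      Tendsto (fun n => (unifPi n {X | domNum n X (N01 r c) = 1}).toReal)
        atTop (𝓝 1)) ∧
    (r < 1 / max c (1 - c) →
      Tendsto (fun n => (unifPi n {X | domNum n X (N01 r c) = 2}).toReal)
        atTop (𝓝 1)) ∧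
    (r = 1 / max c (1 - c) → c ≠ 1/2 →
      Tendsto (fun n => (unifPi n {X | domNum n X (N01 r c) = 2}).toReal)
        atTop (𝓝 ((1 / max c (1 - c)) / (1 / max c (1 - c) + 1))) ∧
      Tendsto (fun n => (unifPi n {X | domNum n X (N01 r c) = 1}).toReal)
        atTop (𝓝 (1 - (1 / max c (1 - c)) / (1 / max c (1 - c) + 1)))) := by
  obtain ⟨hc0, hc1⟩ := hc
  obtain ⟨m, hm, hm1, hmax, hne, hprob⟩ : ∃ m, 1 / 2 ≤ m ∧ m < 1 ∧ max c (1 - c) = m ∧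
      (c ≠ 1 / 2 → m ≠ 1 / 2) ∧ ∀ n k, unifPi n {X | domNum n X (N01 r c) = k} =
        unifPi n {X | domNum n X (N01 r m) = k} := by
    rcases le_total (1 / 2) c with h | h
    · exact ⟨c, h, hc1, max_eq_left (by linarith), id, fun _ _ => rfl⟩
    · refine ⟨1 - c, by linarith, by linarith, max_eq_right (by linarith), fun h' h'' => h' ?_,
        fun n k => (unifPi_domNum_N01_oneSub n k r c).symm⟩
      linarith
  have hm0 : 0 < m := by linarith
  simp only [hmax, hprob]
  refine ⟨fun h => ?_, fun h => ?_, fun h hc' => ?_⟩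
  · exact tendsto_unifPi_domNum_eq_one hm0 hm1 (by rwa [div_lt_iff₀ hm0] at h)
  · have hrm : r * m < 1 := by rwa [lt_div_iff₀ hm0] at h
    exact tendsto_unifPi_domNum_eq_two hm0.le hm1.le hr hrm (by nlinarith)
  · have hrm : r * m = 1 := by rw [h]; field_simp
    have hval : 1 / m / (1 / m + 1) = 1 / (1 + m) := by field_simp
    rw [hval]
    exact tendsto_unifPi_domNum_critical (lt_of_le_of_ne hm (hne hc').symm) hm1 hrm
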